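/- arXiv:0812.2387 — 2 statements merged into one kernel-verified Lean document; each statement's English description precedes it below -/
import Mathlib

section
/- Let X, Y be metric spaces, f : X → Y a homeomorphism, μ a nonzero finite Borel measure on X, and α > 0. Suppose that for μ-almost every x ∈ X the limit lim_{y→x, y≠x} log dist(f(x),f(y)) / log dist(x,y) exists and equals α. Then the dimension of the pushforward measure satisfies dim f_*μ = (dim μ)/α. (Abstract form of the derivation of the paper's Theorem 1.5 from Theorem 1.4.) -/
open MeasureTheory Topology Filter
open scoped NNReal ENNReal

/-- The dimension of a measure: the infimum of Hausdorff dimensions of Borel sets of full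
measure. -/
noncomputable def measureDim {Z : Type*} [MetricSpace Z] [MeasurableSpace Z]
    (ν : Measure Z) : ℝ≥0∞ :=
  sInf {d : ℝ≥0∞ | ∃ E : Set Z, MeasurableSet E ∧ ν Eᶜ = 0 ∧ dimH E = d}

/-- A set of finite Hausdorff dimension is separable. -/
lemma isSeparable_of_dimH_ne_top {X : Type*} [MetricSpace X] {s : Set X}
    (h : dimH s ≠ ∞) : TopologicalSpace.IsSeparable s := by
  borelize X
  obtain ⟨d, hd, -⟩ := ENNReal.lt_iff_exists_nnreal_btwn.1 h.lt_top
  have h0 : μH[(d : ℝ)] s = 0 := hausdorffMeasure_of_dimH_lt hd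
  have key : ∀ k : ℕ, ∃ t : ℕ → Set X,
      (s ⊆ ⋃ n, t n) ∧ ∀ n, EMetric.diam (t n) ≤ ((k : ℝ≥0∞) + 1)⁻¹ := by
    intro k
    by_contra hc
    push_neg at hc
    have htop : μH[(d : ℝ)] s = ∞ := by
      rw [Measure.hausdorffMeasure_apply]
      refine eq_top_iff.2 (le_trans ?_ (le_iSup₂ (((k : ℝ≥0∞) + 1)⁻¹)
        (ENNReal.inv_pos.2 (by simp))))
      refine le_iInf fun t => le_iInf fun hcov => le_iInf fun hdiam => ?_
      obtain ⟨n, hn⟩ := hc t hcov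
      exact absurd (hdiam n) (not_le.2 hn)
    rw [h0] at htop
    exact ENNReal.zero_ne_top htop
  rcases s.eq_empty_or_nonempty with rfl | ⟨x0, hx0⟩
  · exact Set.countable_empty.isSeparable
  choose t ht hdiam using key
  classical
  set c : ℕ → ℕ → X := fun k n => if hne : (t k n).Nonempty then hne.choose else x0 with hc
  refine ⟨Set.range fun p : ℕ × ℕ => c p.1 p.2, Set.countable_range _, ?_⟩
  intro x hx
  rw [EMetric.mem_closure_iff]
  intro ε hε
  obtain ⟨k, hk⟩ := ENNReal.exists_inv_nat_lt (ne_of_gt hε)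
  obtain ⟨n, hn⟩ := Set.mem_iUnion.1 (ht k hx)
  have hne : (t k n).Nonempty := ⟨x, hn⟩
  have hmem : c k n ∈ t k n := by
    rw [hc]; simp only [dif_pos hne]; exact hne.choose_spec
  refine ⟨c k n, ⟨(k, n), rfl⟩, ?_⟩
  calc edist x (c k n) ≤ EMetric.diam (t k n) := EMetric.edist_le_diam_of_mem hn hmem
    _ ≤ ((k : ℝ≥0∞) + 1)⁻¹ := hdiam k n
    _ ≤ ((k : ℝ≥0∞))⁻¹ := ENNReal.inv_le_inv.2 le_self_add
    _ < ε := hk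

/-- Hausdorff dimension bound for a map that is locally Hölder at small scales on a set. -/
lemma dimH_image_le_of_local {X Y : Type*} [MetricSpace X] [MetricSpace Y]
    (g : X → Y) (S : Set X) (β : ℝ≥0) (hβ : 0 < β) (r : ℝ) (hr : 0 < r)
    (h : ∀ x ∈ S, ∀ y ∈ S, dist x y < r → edist (g x) (g y) ≤ edist x y ^ (β : ℝ)) :
    dimH (g '' S) ≤ dimH S / β := by
  by_cases htop : dimH S = ∞
  · rw [htop, ENNReal.top_div_of_lt_top ENNReal.coe_lt_top]
    exact le_top
  rcases S.eq_empty_or_nonempty with rfl | hne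
  · simp
  obtain ⟨D, hDc, hDsub⟩ := isSeparable_of_dimH_ne_top htop
  have hDne : D.Nonempty := by
    rcases D.eq_empty_or_nonempty with rfl | h'
    · rw [closure_empty] at hDsub
      exact absurd (hDsub hne.choose_spec) (Set.notMem_empty _)
    · exact h'
  obtain ⟨cseq, hcs⟩ := hDc.exists_eq_range hDne
  set T : ℕ → Set X := fun n => S ∩ Metric.ball (cseq n) (r / 3) with hT
  have hcover : S ⊆ ⋃ n, T n := by
    intro x hx
    obtain ⟨y, hyD, hy⟩ := Metric.mem_closure_iff.1 (hDsub hx) (r / 3) (by positivity)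
    rw [hcs] at hyD
    obtain ⟨n, rfl⟩ := hyD
    exact Set.mem_iUnion.2 ⟨n, hx, Metric.mem_ball.2 hy⟩
  have hhold : ∀ n, HolderOnWith 1 β g (T n) := by
    intro n x hx y hy
    rw [ENNReal.coe_one, one_mul]
    refine h x hx.1 y hy.1 ?_
    have h1 : dist x (cseq n) < r / 3 := Metric.mem_ball.1 hx.2
    have h2 : dist y (cseq n) < r / 3 := Metric.mem_ball.1 hy.2
    calc dist x y ≤ dist x (cseq n) + dist (cseq n) y := dist_triangle _ _ _
      _ = dist x (cseq n) + dist y (cseq n) := by rw [dist_comm (cseq n) y]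
      _ < r := by linarith
  calc dimH (g '' S) ≤ dimH (⋃ n, g '' T n) := by
        refine dimH_mono ?_
        rw [← Set.image_iUnion]
        exact Set.image_mono hcover
    _ = ⨆ n, dimH (g '' T n) := dimH_iUnion _
    _ ≤ ⨆ n, dimH (T n) / β := iSup_mono fun n => (hhold n).dimH_image_le hβ
    _ ≤ dimH S / β := iSup_le fun n =>
        ENNReal.div_le_div_right (dimH_mono Set.inter_subset_left) _

/-- Dimension of the image measure under a homeomorphism which is a.e. locally Hölder of
exponent `β`. -/
lemma measureDim_map_le {X Y : Type*} [MetricSpace X] [MetricSpace Y]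
    [MeasurableSpace X] [BorelSpace X] [MeasurableSpace Y] [BorelSpace Y]
    (g : X ≃ₜ Y) (μ : Measure X) {β : ℝ} (hβ : 0 < β)
    (h : ∀ᵐ x ∂μ, ∃ n : ℕ, ∀ y, dist x y < 1 / ((n : ℝ) + 1) →
        dist (g x) (g y) ≤ dist x y ^ β) :
    measureDim (Measure.map g μ) ≤ measureDim μ / ENNReal.ofReal β := by
  have hc0 : ENNReal.ofReal β ≠ 0 := by
    simp [ENNReal.ofReal_eq_zero, not_le, hβ]
  have hct : ENNReal.ofReal β ≠ ∞ := ENNReal.ofReal_ne_top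
  rw [ENNReal.le_div_iff_mul_le (Or.inl hc0) (Or.inl hct)]
  refine le_sInf ?_
  rintro d ⟨E, hEm, hE0, rfl⟩
  rw [← ENNReal.le_div_iff_mul_le (Or.inl hc0) (Or.inl hct)]
  set N := toMeasurable μ {x | ¬ ∃ n : ℕ, ∀ y, dist x y < 1 / ((n : ℝ) + 1) →
    dist (g x) (g y) ≤ dist x y ^ β} with hN
  have hNm : MeasurableSet N := measurableSet_toMeasurable _ _
  have hN0 : μ N = 0 := by
    rw [hN, measure_toMeasurable]
    exact ae_iff.1 h
  set S := E ∩ Nᶜ with hS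
  have hSm : MeasurableSet S := hEm.inter hNm.compl
  have hS0 : μ Sᶜ = 0 := by
    rw [hS, Set.compl_inter, compl_compl]
    exact measure_union_null hE0 hN0
  have hgm : Measurable g := g.continuous.measurable
  have hFm : MeasurableSet (g '' S) := by
    rw [← g.preimage_symm]
    exact g.symm.continuous.measurable hSm
  have hF0 : Measure.map g μ (g '' S)ᶜ = 0 := by
    rw [Measure.map_apply hgm hFm.compl, Set.preimage_compl,
      Set.preimage_image_eq S g.injective]
    exact hS0
  refine le_trans (sInf_le ⟨g '' S, hFm, hF0, rfl⟩) ?_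
  set P : ℕ → Set X := fun n => {x | ∀ y, dist x y < 1 / ((n : ℝ) + 1) →
    dist (g x) (g y) ≤ dist x y ^ β} with hP
  have hcov : S ⊆ ⋃ n, S ∩ P n := by
    intro x hx
    have hxP : ∃ n, x ∈ P n := by
      by_contra h'
      exact hx.2 (subset_toMeasurable _ _ (by simpa [hP] using h'))
    obtain ⟨n, hn⟩ := hxP
    exact Set.mem_iUnion.2 ⟨n, hx, hn⟩
  set βn : ℝ≥0 := β.toNNReal with hβn'
  have hβn : 0 < βn := Real.toNNReal_pos.2 hβ
  have hβR : (βn : ℝ) = β := Real.coe_toNNReal β hβ.le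
  have hco : ENNReal.ofReal β = (βn : ℝ≥0∞) := rfl
  have key : ∀ n, dimH (g '' (S ∩ P n)) ≤ dimH (S ∩ P n) / βn := by
    intro n
    refine dimH_image_le_of_local g _ βn hβn (1 / ((n : ℝ) + 1)) (by positivity) ?_
    intro x hx y _ hxy
    have hd := hx.2 y hxy
    rw [edist_dist, edist_dist, hβR]
    calc ENNReal.ofReal (dist (g x) (g y)) ≤ ENNReal.ofReal (dist x y ^ β) :=
          ENNReal.ofReal_le_ofReal hd
      _ = ENNReal.ofReal (dist x y) ^ β :=
          (ENNReal.ofReal_rpow_of_nonneg dist_nonneg hβ.le).symm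
  calc dimH (g '' S) ≤ dimH (⋃ n, g '' (S ∩ P n)) := by
        refine dimH_mono ?_
        rw [← Set.image_iUnion]
        exact Set.image_mono hcov
    _ = ⨆ n, dimH (g '' (S ∩ P n)) := dimH_iUnion _
    _ ≤ ⨆ n, dimH (S ∩ P n) / βn := iSup_mono key
    _ ≤ dimH E / ENNReal.ofReal β := by
        rw [hco]
        exact iSup_le fun n =>
          ENNReal.div_le_div_right (dimH_mono (Set.inter_subset_left.trans
            Set.inter_subset_left)) _

/-- Pointwise consequence of the logarithmic exponent condition. -/
lemma local_est {X Y : Type*} [MetricSpace X] [MetricSpace Y] (f : X ≃ₜ Y) {x : X} {α ε : ℝ}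
    (hε : 0 < ε) (hεα : ε < α)
    (hx : Tendsto (fun y => Real.log (dist (f x) (f y)) / Real.log (dist x y))
      (𝓝[≠] x) (𝓝 α)) :
    ∃ r > 0, ∀ y, y ≠ x → dist x y < r →
      dist (f x) (f y) ≤ dist x y ^ (α - ε) ∧ dist x y ^ (α + ε) ≤ dist (f x) (f y) := by
  have ev1 : ∀ᶠ y in 𝓝[≠] x,
      Real.log (dist (f x) (f y)) / Real.log (dist x y) ∈ Set.Ioo (α - ε) (α + ε) :=
    hx (Ioo_mem_nhds (by linarith) (by linarith))
  have ev2 : ∀ᶠ y in 𝓝[≠] x, dist x y < 1 := by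
    refine eventually_nhdsWithin_of_eventually_nhds ?_
    filter_upwards [Metric.ball_mem_nhds x one_pos] with y hy
    rw [dist_comm]
    exact Metric.mem_ball.1 hy
  have ev3 : ∀ᶠ y in 𝓝[≠] x, dist (f x) (f y) < 1 := by
    refine eventually_nhdsWithin_of_eventually_nhds ?_
    filter_upwards [f.continuous.tendsto x (Metric.ball_mem_nhds (f x) one_pos)] with y hy
    rw [dist_comm]
    exact Metric.mem_ball.1 hy
  obtain ⟨r, hr, hsub⟩ := Metric.mem_nhdsWithin_iff.1 (ev1.and (ev2.and ev3))
  refine ⟨r, hr, fun y hyx hyr => ?_⟩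
  have hy : y ∈ Metric.ball x r ∩ {x}ᶜ :=
    ⟨Metric.mem_ball.2 (by rw [dist_comm]; exact hyr), hyx⟩
  obtain ⟨hratio, hd1, hD1⟩ := hsub hy
  have hd0 : 0 < dist x y := dist_pos.2 (Ne.symm hyx)
  have hD0 : 0 < dist (f x) (f y) := dist_pos.2 fun hc => hyx (f.injective hc.symm)
  have hlog : Real.log (dist x y) < 0 := Real.log_neg hd0 hd1
  have hlogne : Real.log (dist x y) ≠ 0 := ne_of_lt hlog
  have heq : Real.log (dist (f x) (f y)) =
      Real.log (dist (f x) (f y)) / Real.log (dist x y) * Real.log (dist x y) :=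
    (div_mul_cancel₀ _ hlogne).symm
  have hub : Real.log (dist (f x) (f y)) < (α - ε) * Real.log (dist x y) := by
    rw [heq]
    exact mul_lt_mul_of_neg_right hratio.1 hlog
  have hlb : (α + ε) * Real.log (dist x y) < Real.log (dist (f x) (f y)) := by
    rw [heq]
    exact mul_lt_mul_of_neg_right hratio.2 hlog
  constructor
  · have := Real.exp_lt_exp.2 hub
    rw [Real.exp_log hD0] at this
    rw [Real.rpow_def_of_pos hd0, mul_comm]
    exact this.le
  · have := Real.exp_lt_exp.2 hlb
    rw [Real.exp_log hD0] at this
    rw [Real.rpow_def_of_pos hd0, mul_comm]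
    exact this.le

/-- If a homeomorphism `f : X → Y` has pointwise logarithmic Hölder exponent `α` at
`μ`-almost every point, then `dim f_*μ = (dim μ) / α`. -/
theorem measureDim_map_of_ae_log_exponent {X Y : Type*} [MetricSpace X] [MetricSpace Y]
    [MeasurableSpace X] [BorelSpace X] [MeasurableSpace Y] [BorelSpace Y]
    (f : X ≃ₜ Y) (μ : Measure X) [IsFiniteMeasure μ] (hμ : μ ≠ 0) (α : ℝ) (hα : 0 < α)
    (h : ∀ᵐ x ∂μ,
      Tendsto (fun y => Real.log (dist (f x) (f y)) / Real.log (dist x y))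
        (𝓝[≠] x) (nhds α)) :
    measureDim (Measure.map f μ) = measureDim μ / ENNReal.ofReal α := by
  have hα0 : ENNReal.ofReal α ≠ 0 := by simp [ENNReal.ofReal_eq_zero, not_le, hα]
  have hαt : ENNReal.ofReal α ≠ ∞ := ENNReal.ofReal_ne_top
  have hfm : Measurable f := f.continuous.measurable
  have hfsm : Measurable f.symm := f.symm.continuous.measurable
  set ν := Measure.map f μ with hν
  -- key upper bound
  have key₁ : ∀ ε : ℝ, 0 < ε → ε < α →
      measureDim ν ≤ measureDim μ / ENNReal.ofReal (α - ε) := by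
    intro ε hε hεα
    refine measureDim_map_le f μ (by linarith) ?_
    filter_upwards [h] with x hx
    obtain ⟨r, hr, hprop⟩ := local_est f hε hεα hx
    obtain ⟨n, hn⟩ := exists_nat_one_div_lt hr
    refine ⟨n, fun y hy => ?_⟩
    by_cases hyx : y = x
    · subst hyx
      simp only [dist_self]
      exact Real.rpow_nonneg le_rfl _
    · exact (hprop y hyx (hy.trans hn)).1
  -- key lower bound
  have key₂ : ∀ ε : ℝ, 0 < ε → ε < α →
      measureDim μ ≤ measureDim ν * ENNReal.ofReal (α + ε) := by
    intro ε hε hεα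
    have hβ : (0 : ℝ) < 1 / (α + ε) := by positivity
    have hae : ∀ᵐ u ∂ν, ∃ n : ℕ, ∀ v, dist u v < 1 / ((n : ℝ) + 1) →
        dist (f.symm u) (f.symm v) ≤ dist u v ^ (1 / (α + ε)) := by
      have := f.toMeasurableEquiv.map_ae μ
      have hνeq : Measure.map f.toMeasurableEquiv μ = ν := by
        rw [hν]; congr 1
      rw [hνeq] at this
      rw [← this, eventually_map]
      filter_upwards [h] with x hx
      obtain ⟨r, hr, hprop⟩ := local_est f hε hεα hx
      obtain ⟨δ, hδ, hball⟩ := Metric.mem_nhds_iff.1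
        (f.symm.continuous.tendsto (f x) (by
          rw [f.symm_apply_apply]
          exact Metric.ball_mem_nhds x hr))
      obtain ⟨n, hn⟩ := exists_nat_one_div_lt hδ
      simp only [Homeomorph.toMeasurableEquiv_coe]
      refine ⟨n, fun v hv => ?_⟩
      by_cases hvx : v = f x
      · subst hvx
        simp only [dist_self]
        exact Real.rpow_nonneg le_rfl _
      · set y := f.symm v with hy
        have hyx : y ≠ x := by
          intro hc
          exact hvx (by rw [← f.apply_symm_apply v, ← hy, hc])
        have hvy : f y = v := f.apply_symm_apply v
        have hmem : y ∈ Metric.ball x r := by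
          apply hball
          rw [Metric.mem_ball, dist_comm]
          exact hv.trans hn
        have hdxy : dist x y < r := by
          rw [dist_comm]; exact Metric.mem_ball.1 hmem
        have hest := (hprop y hyx hdxy).2
        rw [hvy] at hest
        have : dist x y ≤ dist (f x) v ^ (1 / (α + ε)) := by
          have h2 := Real.rpow_le_rpow (Real.rpow_nonneg dist_nonneg _) hest hβ.le
          rwa [← Real.rpow_mul dist_nonneg, mul_one_div_cancel (by linarith : α + ε ≠ 0),
            Real.rpow_one] at h2
        rw [f.symm_apply_apply]
        exact this
    have hb := measureDim_map_le f.symm ν hβ hae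
    have hmm : Measure.map f.symm ν = μ := by
      rw [hν, Measure.map_map hfsm hfm]
      simp only [Homeomorph.symm_comp_self, Measure.map_id]
    rw [hmm] at hb
    refine hb.trans ?_
    rw [one_div, ENNReal.ofReal_inv_of_pos (by linarith), div_eq_mul_inv, inv_inv]
  -- pass to the limit
  have ineq1 : measureDim ν ≤ measureDim μ / ENNReal.ofReal α := by
    rw [ENNReal.le_div_iff_mul_le (Or.inl hα0) (Or.inl hαt)]
    have hk : ∀ k : ℕ, measureDim ν * ENNReal.ofReal (α - α / (k + 2)) ≤ measureDim μ := by
      intro k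
      have h1 : (0 : ℝ) < α / (k + 2) := by positivity
      have h2 : α / (k + 2) < α := by
        rw [div_lt_iff₀ (by positivity)]
        nlinarith
      have := key₁ (α / (k + 2)) h1 h2
      rwa [ENNReal.le_div_iff_mul_le (by left; simp [ENNReal.ofReal_eq_zero, not_le]; linarith)
        (Or.inl ENNReal.ofReal_ne_top)] at this
    have htend : Tendsto (fun k : ℕ => measureDim ν * ENNReal.ofReal (α - α / (k + 2)))
        atTop (𝓝 (measureDim ν * ENNReal.ofReal α)) := by
      refine ENNReal.Tendsto.const_mul ?_ (Or.inl hα0)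
      refine (ENNReal.continuous_ofReal.tendsto α).comp ?_
      have : Tendsto (fun k : ℕ => α / ((k : ℝ) + 2)) atTop (𝓝 0) := by
        apply Tendsto.div_atTop tendsto_const_nhds
        exact tendsto_atTop_add_const_right atTop 2 tendsto_natCast_atTop_atTop
      have := this.const_sub α
      simpa using this
    exact le_of_tendsto htend (Filter.Eventually.of_forall hk)
  have ineq2 : measureDim μ / ENNReal.ofReal α ≤ measureDim ν := by
    rw [ENNReal.div_le_iff_le_mul (Or.inl hα0) (Or.inl hαt)]
    have hk : ∀ k : ℕ, measureDim μ ≤ measureDim ν * ENNReal.ofReal (α + α / (k + 2)) := by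
      intro k
      have h1 : (0 : ℝ) < α / (k + 2) := by positivity
      have h2 : α / (k + 2) < α := by
        rw [div_lt_iff₀ (by positivity)]
        nlinarith
      exact key₂ (α / (k + 2)) h1 h2
    have htend : Tendsto (fun k : ℕ => measureDim ν * ENNReal.ofReal (α + α / (k + 2)))
        atTop (𝓝 (measureDim ν * ENNReal.ofReal α)) := by
      refine ENNReal.Tendsto.const_mul ?_ (Or.inl hα0)
      refine (ENNReal.continuous_ofReal.tendsto α).comp ?_
      have : Tendsto (fun k : ℕ => α / ((k : ℝ) + 2)) atTop (𝓝 0) := by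
        apply Tendsto.div_atTop tendsto_const_nhds
        exact tendsto_atTop_add_const_right atTop 2 tendsto_natCast_atTop_atTop
      have := this.const_add α
      simpa using this
    exact ge_of_tendsto htend (Filter.Eventually.of_forall hk)
  exact le_antisymm ineq1 ineq2
end

section
/- Let d ≥ 2 and k ≥ 1 be integers and let ν₁, …, ν_k be real numbers with ν_l ≥ 1 for all l. Suppose that for every natural number j there exist real numbers E_j and V_j such that, with F_j = 2·d^j: (i) 2 = F_j − E_j + V_j, (ii) k·F_j = 2·E_j, and (iii) (F_j/2)·Σ_{l=1}^k 1/ν_l ≤ V_j ≤ (F_j/2)·Σ_{l=1}^k 1/ν_l + k². Then 2 + Σ_{l=1}^k (1/ν_l − 1) = 0. (Euler-characteristic counting argument at the core of the paper's Lemma 7.2: the orbifold must be parabolic.) -/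
open scoped BigOperators

/-- The Euler-characteristic counting argument: if for every `j` there are numbers of
edges `E_j` and vertices `V_j` satisfying the Euler formula with `F_j = 2·d^j` faces,
the incidence relation `k·F_j = 2·E_j`, and the vertex-count bounds
`(F_j/2)·Σ 1/ν_l ≤ V_j ≤ (F_j/2)·Σ 1/ν_l + k²`, then the orbifold Euler characteristic
`2 + Σ (1/ν_l − 1)` vanishes. -/
theorem orbifold_parabolic_of_counting (d k : ℕ) (hd : 2 ≤ d) (hk : 1 ≤ k)
    (ν : Fin k → ℝ) (hν : ∀ l, 1 ≤ ν l)
    (h : ∀ j : ℕ, ∃ E V : ℝ,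
      (2 : ℝ) = 2 * (d : ℝ) ^ j - E + V ∧
      (k : ℝ) * (2 * (d : ℝ) ^ j) = 2 * E ∧
      (2 * (d : ℝ) ^ j / 2) * (∑ l, 1 / ν l) ≤ V ∧
      V ≤ (2 * (d : ℝ) ^ j / 2) * (∑ l, 1 / ν l) + (k : ℝ) ^ 2) :
    2 + ∑ l, (1 / ν l - 1) = 0 := by
  set S : ℝ := ∑ l, 1 / ν l with hS
  have hsum : ∑ l, (1 / ν l - 1) = S - k := by
    rw [Finset.sum_sub_distrib]
    simp [hS]
  rw [hsum]
  set χ : ℝ := 2 + (S - k) with hχ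
  -- key bounds for all j
  have key : ∀ j : ℕ, (d : ℝ) ^ j * χ ≤ 2 ∧ 2 - (k : ℝ) ^ 2 ≤ (d : ℝ) ^ j * χ := by
    intro j
    obtain ⟨E, V, h1, h2, h3, h4⟩ := h j
    have hE : E = k * (d : ℝ) ^ j := by linarith
    have hV : V = 2 - 2 * (d : ℝ) ^ j + k * (d : ℝ) ^ j := by linarith
    have expand : (d : ℝ) ^ j * χ = 2 * (d : ℝ) ^ j + (d : ℝ) ^ j * S - k * (d : ℝ) ^ j := by
      rw [hχ]; ring
    have hhalf : 2 * (d : ℝ) ^ j / 2 * S = (d : ℝ) ^ j * S := by ring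
    rw [hhalf] at h3 h4
    constructor
    · linarith
    · linarith
  have hd1 : (1 : ℝ) < d := by
    have : (2 : ℝ) ≤ d := by exact_mod_cast hd
    linarith
  by_contra hne
  rcases lt_or_gt_of_ne hne with hlt | hgt
  · -- χ < 0 : pick n with (k²-2)/(-χ) < d^n
    obtain ⟨n, hn⟩ := pow_unbounded_of_one_lt (((k : ℝ) ^ 2 - 2) / (-χ)) hd1
    have hpos : (0 : ℝ) < -χ := by linarith
    have : ((k : ℝ) ^ 2 - 2) < (d : ℝ) ^ n * (-χ) := by
      rwa [div_lt_iff₀ hpos] at hn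
    have := (key n).2
    nlinarith
  · -- χ > 0 : pick n with 2/χ < d^n
    obtain ⟨n, hn⟩ := pow_unbounded_of_one_lt ((2 : ℝ) / χ) hd1
    have : (2 : ℝ) < (d : ℝ) ^ n * χ := by
      rwa [div_lt_iff₀ hgt] at hn
    have := (key n).1
    linarith
end
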